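/- arXiv:1710.08318 — 4 statements merged into one kernel-verified Lean document; each statement's English description precedes it below -/
import Mathlib

section
/- Let F̃ : ℝ → ℝ be C¹ with F̃'(0) = 0 and suppose F̃' is monotone with |F̃'(y)| ≥ |y| and y·F̃'(y) ≥ 0 for all y. Then for every m ∈ ℝ there exists a constant C ≥ 0 (depending on F̃ and m) such that for all y ∈ ℝ: (1/2)·|F̃'(y)|·(1+|y|) ≤ F̃'(y)·(y − m) + C. -/
theorem stmt2 (Ft : ℝ → ℝ) (hF : ContDiff ℝ 1 Ft)
    (h0 : deriv Ft 0 = 0) (hmono : Monotone (deriv Ft))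
    (hcoer : ∀ y : ℝ, |deriv Ft y| ≥ |y|) (hsign : ∀ y : ℝ, y * deriv Ft y ≥ 0) :
    ∀ m : ℝ, ∃ C : ℝ, 0 ≤ C ∧ ∀ y : ℝ,
      (1 / 2) * |deriv Ft y| * (1 + |y|) ≤ deriv Ft y * (y - m) + C := by
  intro m
  set f := deriv Ft with hf
  set R : ℝ := 2 * |m| + 1 with hRdef
  have hRpos : (0:ℝ) < R := by positivity
  set M : ℝ := |f (-R)| + |f R| with hMdef
  have hM0 : 0 ≤ M := by positivity
  refine ⟨(1/2 + |m|) * M, by positivity, ?_⟩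
  intro y
  have habs : |f y| * |y| = f y * y := by
    rcases le_or_gt 0 y with hy | hy
    · have h1 : 0 ≤ f y := h0 ▸ hmono hy
      rw [abs_of_nonneg h1, abs_of_nonneg hy]
    · have h1 : f y ≤ 0 := h0 ▸ hmono hy.le
      rw [abs_of_nonpos h1, abs_of_nonpos hy.le]; ring
  have hmf : m * f y ≤ |m| * |f y| := by
    calc m * f y ≤ |m * f y| := le_abs_self _
    _ = |m| * |f y| := abs_mul _ _
  rcases le_or_gt R |y| with hy | hy
  · have key : (1/2) * |f y| * R ≤ (1/2) * |f y| * |y| :=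
      mul_le_mul_of_nonneg_left hy (by positivity)
    nlinarith [abs_nonneg (f y), abs_nonneg m]
  · have hyl := abs_lt.mp hy
    have h1 : f y ≤ f R := hmono hyl.2.le
    have h2 : f (-R) ≤ f y := hmono hyl.1.le
    have hfM : |f y| ≤ M := by
      rw [abs_le]
      constructor
      · have := neg_abs_le (f (-R)); linarith [abs_nonneg (f R)]
      · have := le_abs_self (f R); linarith [abs_nonneg (f (-R))]
    nlinarith [abs_nonneg (f y), abs_nonneg y, abs_nonneg m,
      mul_nonneg (mul_nonneg (by norm_num : (0:ℝ) ≤ 1/2) (abs_nonneg (f y))) (abs_nonneg y)]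
end

section
/- Let γ ∈ (1/2, 1], C > 0, and let g : [0, ∞) → [0, ∞) be a nonincreasing differentiable function satisfying g(t) ≤ C·(−g'(t))^{γ} for all t ≥ 0. Then ∫₀^∞ (−g'(t))^{1/2} dt < ∞. -/
/-!
With `δ = 1 / (2γ) < 1`, the function `F = -g ^ (1 - δ)` is monotone and bounded above on
`[0, ∞)`, so its derivative is integrable there by Lebesgue's theorem on monotone functions.
Where `g > 0`, the hypothesis gives `g ^ δ ≤ C ^ δ (-g') ^ (1/2)`, hence
`(-g') ^ (1/2) ≤ C ^ δ g ^ (-δ) (-g') = C ^ δ / (1 - δ) · F'`.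
Where `g = 0`, the point is a minimum of `g` and a maximum of `F`, so both sides vanish.
-/

open Set MeasureTheory Filter Topology

lemma MonotoneOn.deriv_nonneg_of_mem_nhds {F : ℝ → ℝ} {s : Set ℝ} {x : ℝ}
    (hF : MonotoneOn F s) (hx : s ∈ 𝓝 x) : 0 ≤ deriv F x :=
  derivWithin_of_mem_nhds (f := F) hx ▸ hF.derivWithin_nonneg

theorem MonotoneOn.integrableOn_Ioi_deriv_of_le {F : ℝ → ℝ} {a M : ℝ}
    (hF : MonotoneOn F (Ici a)) (hM : ∀ x ∈ Ici a, F x ≤ M) :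
    IntegrableOn (deriv F) (Ioi a) := by
  have hmono (n : ℕ) : MonotoneOn F (uIcc a (a + n)) := by
    rw [uIcc_of_le (by simp)]
    exact hF.mono Icc_subset_Ici_self
  refine integrableOn_Ioi_of_intervalIntegral_norm_bounded (M - F a) a
    (fun n => (hmono n).intervalIntegrable_deriv.1)
    (tendsto_atTop_add_const_left _ a tendsto_natCast_atTop_atTop)
    (Eventually.of_forall fun n => ?_)
  have hnorm : ∫ x in a..a + n, ‖deriv F x‖ = ∫ x in a..a + n, deriv F x := by
    refine intervalIntegral.integral_congr_ae (Eventually.of_forall fun x hx => ?_)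
    have hxa : a < x := by simpa [uIoc_of_le] using hx.1
    exact Real.norm_of_nonneg (hF.deriv_nonneg_of_mem_nhds (Ici_mem_nhds hxa))
  rw [hnorm]
  have hFa : F a ≤ M := hM a self_mem_Ici
  have hFn : F (a + n) ≤ M := hM (a + n) (by simp)
  exact ((hmono n).intervalIntegral_deriv_mem_uIcc).2.trans (max_le (by linarith) (by linarith))

lemma rpow_one_half_le_of_le_mul_rpow {x y γ C : ℝ} (hγ : 0 < γ) (hC : 0 ≤ C) (hx : 0 ≤ x)
    (hy : 0 < y) (h : y ≤ C * x ^ γ) :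
    x ^ (1 / 2 : ℝ) ≤ C ^ (2 * γ)⁻¹ * y ^ (-(2 * γ)⁻¹) * x := by
  have hyδ : y ^ (2 * γ)⁻¹ ≤ C ^ (2 * γ)⁻¹ * x ^ (1 / 2 : ℝ) :=
    calc y ^ (2 * γ)⁻¹ ≤ (C * x ^ γ) ^ (2 * γ)⁻¹ := by gcongr
      _ = C ^ (2 * γ)⁻¹ * x ^ (1 / 2 : ℝ) := by
        rw [Real.mul_rpow hC (by positivity), ← Real.rpow_mul hx]
        congr 2
        field_simp
  have hsq : x ^ (1 / 2 : ℝ) * x ^ (1 / 2 : ℝ) = x := by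
    rw [← Real.sqrt_eq_rpow, Real.mul_self_sqrt hx]
  calc x ^ (1 / 2 : ℝ) = x ^ (1 / 2 : ℝ) * y ^ (2 * γ)⁻¹ * y ^ (-(2 * γ)⁻¹) := by
        rw [mul_assoc, ← Real.rpow_add hy, add_neg_cancel, Real.rpow_zero, mul_one]
    _ ≤ x ^ (1 / 2 : ℝ) * (C ^ (2 * γ)⁻¹ * x ^ (1 / 2 : ℝ)) * y ^ (-(2 * γ)⁻¹) := by
        gcongr
    _ = C ^ (2 * γ)⁻¹ * y ^ (-(2 * γ)⁻¹) * (x ^ (1 / 2 : ℝ) * x ^ (1 / 2 : ℝ)) := by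
        ring
    _ = C ^ (2 * γ)⁻¹ * y ^ (-(2 * γ)⁻¹) * x := by rw [hsq]

lemma rpow_one_half_neg_le_deriv_neg_rpow {g : ℝ → ℝ} {g' γ C t : ℝ} (hγ : 1 / 2 < γ)
    (hC : 0 ≤ C) (hd : HasDerivAt g g' t) (hg' : g' ≤ 0) (hnn : ∀ᶠ s in 𝓝 t, 0 ≤ g s)
    (hLS : g t ≤ C * (-g') ^ γ) :
    (-g') ^ (1 / 2 : ℝ) ≤
      C ^ (2 * γ)⁻¹ / (1 - (2 * γ)⁻¹) * deriv (fun s => -g s ^ (1 - (2 * γ)⁻¹)) t := by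
  have hδ : (2 * γ)⁻¹ < 1 := inv_lt_one_of_one_lt₀ (by linarith)
  rcases hnn.self_of_nhds.eq_or_lt with hzero | hpos
  · have hmin : IsLocalMin g t := hnn.mono fun s hs => hzero ▸ hs
    have hmax : IsLocalMax (fun s => -g s ^ (1 - (2 * γ)⁻¹)) t := by
      refine hnn.mono fun s hs => ?_
      simp only [← hzero, Real.zero_rpow (sub_pos.2 hδ).ne', neg_zero, neg_nonpos]
      positivity
    rw [hmin.hasDerivAt_eq_zero hd, hmax.deriv_eq_zero]
    simp
  · have hderivF := ((hd.rpow_const (p := 1 - (2 * γ)⁻¹) (Or.inl hpos.ne')).fun_neg).deriv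
    rw [hderivF, sub_sub_cancel_left]
    calc (-g') ^ (1 / 2 : ℝ) ≤ C ^ (2 * γ)⁻¹ * g t ^ (-(2 * γ)⁻¹) * -g' :=
          rpow_one_half_le_of_le_mul_rpow (by linarith) hC (by linarith) hpos hLS
      _ = _ := by rw [div_mul_eq_mul_div, eq_div_iff (sub_pos.2 hδ).ne']; ring

theorem stmt6 (γ C : ℝ) (hγ : γ ∈ Set.Ioc (1 / 2 : ℝ) 1) (hC : 0 < C)
    (g g' : ℝ → ℝ)
    (hderiv : ∀ t ≥ (0 : ℝ), HasDerivAt g (g' t) t)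
    (hnn : ∀ t ≥ (0 : ℝ), 0 ≤ g t)
    (hmono : AntitoneOn g (Set.Ici 0))
    (hLS : ∀ t ≥ (0 : ℝ), g t ≤ C * (-(g' t)) ^ γ) :
    MeasureTheory.IntegrableOn (fun t => (-(g' t)) ^ ((1 : ℝ) / 2)) (Set.Ici 0) := by
  set F : ℝ → ℝ := fun s => -g s ^ (1 - (2 * γ)⁻¹)
  have hα : 0 ≤ 1 - (2 * γ)⁻¹ := sub_nonneg.2 (inv_le_one_of_one_le₀ (by linarith [hγ.1]))
  have hF : MonotoneOn F (Ici 0) := fun x hx y hy hxy =>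
    neg_le_neg (Real.rpow_le_rpow (hnn y hy) (hmono hx hy hxy) hα)
  have hFint : IntegrableOn (deriv F) (Ioi 0) :=
    hF.integrableOn_Ioi_deriv_of_le (M := 0) fun x hx =>
      neg_nonpos.2 (Real.rpow_nonneg (hnn x hx) _)
  have hg' (t : ℝ) (ht : 0 < t) : g' t ≤ 0 :=
    (hderiv t ht.le).deriv ▸ derivWithin_of_mem_nhds (f := g) (Ici_mem_nhds ht) ▸
      hmono.derivWithin_nonpos
  rw [integrableOn_Ici_iff_integrableOn_Ioi]
  refine (hFint.const_mul (C ^ (2 * γ)⁻¹ / (1 - (2 * γ)⁻¹))).mono' ?_ ?_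
  · have hmeas : Measurable fun t => (-deriv g t) ^ ((1 : ℝ) / 2) :=
      (measurable_deriv g).neg.pow_const _
    refine hmeas.aestronglyMeasurable.congr ?_
    filter_upwards [ae_restrict_mem measurableSet_Ioi] with t ht
    rw [(hderiv t ht.le).deriv]
  · filter_upwards [ae_restrict_mem measurableSet_Ioi] with t ht
    have hnn_near : ∀ᶠ s in 𝓝 t, 0 ≤ g s :=
      eventually_of_mem (Ioi_mem_nhds ht) fun s hs => hnn s (le_of_lt hs)
    rw [Real.norm_of_nonneg (Real.rpow_nonneg (neg_nonneg.2 (hg' t ht)) _)]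
    exact rpow_one_half_neg_le_deriv_neg_rpow hγ.1 hC.le (hderiv t ht.le) (hg' t ht) hnn_near
      (hLS t ht.le)
end

section
/- Let θ ∈ (0, 1/2], Λ > 0, and let y : [0, ∞) → [0, ∞) and D : [0, ∞) → [0, ∞) be continuous with y differentiable, y'(t) = −D(t), and y(t)^{1−θ} ≤ Λ·√(D(t)) for all t ≥ 0. Then for every t ≥ 0: ∫_t^∞ √(D(τ)) dτ ≤ (Λ/θ)·y(t)^{θ}. -/
open Set MeasureTheory Filter

theorem stmt7 (θ Λ : ℝ) (hθ : θ ∈ Set.Ioc (0 : ℝ) (1 / 2)) (hΛ : 0 < Λ)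
    (y D : ℝ → ℝ) (hycont : Continuous y) (hDcont : Continuous D)
    (hynn : ∀ t ≥ (0 : ℝ), 0 ≤ y t) (hDnn : ∀ t ≥ (0 : ℝ), 0 ≤ D t)
    (hderiv : ∀ t ≥ (0 : ℝ), HasDerivAt y (-(D t)) t)
    (hLS : ∀ t ≥ (0 : ℝ), (y t) ^ (1 - θ) ≤ Λ * Real.sqrt (D t)) :
    ∀ t ≥ (0 : ℝ),
      MeasureTheory.IntegrableOn (fun τ => Real.sqrt (D τ)) (Set.Ioi t) ∧
        ∫ τ in Set.Ioi t, Real.sqrt (D τ) ≤ (Λ / θ) * (y t) ^ θ := by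
  obtain ⟨hθ0, hθhalf⟩ := hθ
  have hsq : Continuous fun τ => Real.sqrt (D τ) := Real.continuous_sqrt.comp hDcont
  -- y is antitone on [0, ∞)
  have hanti : AntitoneOn y (Set.Ici 0) := by
    apply antitoneOn_of_deriv_nonpos (convex_Ici 0) hycont.continuousOn
    · intro s hs
      rw [interior_Ici] at hs
      exact ((hderiv s hs.le).differentiableAt).differentiableWithinAt
    · intro s hs
      rw [interior_Ici] at hs
      rw [(hderiv s hs.le).deriv]
      simpa using hDnn s hs.le
  -- if y vanishes at T ≥ 0, then D vanishes beyond T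
  have hDzero : ∀ T ≥ (0:ℝ), y T = 0 → ∀ s > T, Real.sqrt (D s) = 0 := by
    intro T hT hyT s hs
    have hy0 : ∀ u ∈ Set.Ioi T, y u = (fun _ => (0:ℝ)) u := by
      intro u hu
      have h1 : y u ≤ 0 := hyT ▸ hanti (Set.mem_Ici.2 hT) (Set.mem_Ici.2 (hT.trans hu.le)) hu.le
      exact le_antisymm h1 (hynn u (hT.trans hu.le))
    have hzero : HasDerivAt y 0 s :=
      (hasDerivAt_const s (0:ℝ)).congr_of_eventuallyEq
        (Filter.eventuallyEq_of_mem (Ioi_mem_nhds hs) hy0)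
    have := (hderiv s (hT.trans hs.le)).unique hzero
    have hD0 : D s = 0 := by linarith
    simp [hD0]
  -- Key lemma A: on intervals where y is positive
  have keyA : ∀ a b : ℝ, 0 ≤ a → a ≤ b → (∀ s ∈ Set.Icc a b, 0 < y s) →
      ∫ τ in a..b, Real.sqrt (D τ) ≤ (Λ/θ) * y a ^ θ - (Λ/θ) * y b ^ θ := by
    intro a b ha hab hpos
    set g' : ℝ → ℝ := fun s => -(D s) * θ * y s ^ (θ - 1) with hg'def
    have hg : ∀ s ∈ Set.uIcc a b, HasDerivAt (fun u => y u ^ θ) (g' s) s := by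
      intro s hs
      rw [Set.uIcc_of_le hab] at hs
      exact (hderiv s (ha.trans hs.1)).rpow_const (Or.inl (ne_of_gt (hpos s hs)))
    have hcontg' : ContinuousOn g' (Set.uIcc a b) := by
      rw [Set.uIcc_of_le hab]
      apply ContinuousOn.mul (ContinuousOn.mul (hDcont.neg.continuousOn) continuousOn_const)
      exact ContinuousOn.rpow_const hycont.continuousOn
        (fun s hs => Or.inl (ne_of_gt (hpos s hs)))
    have hint : IntervalIntegrable g' MeasureTheory.volume a b := hcontg'.intervalIntegrable
    have hftc : ∫ s in a..b, g' s = y b ^ θ - y a ^ θ :=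
      intervalIntegral.integral_eq_sub_of_hasDerivAt hg hint
    have hpt : ∀ s ∈ Set.Icc a b, Real.sqrt (D s) ≤ (Λ/θ) * (-(g' s)) := by
      intro s hs
      have hs0 : (0:ℝ) ≤ s := ha.trans hs.1
      have hyp : 0 < y s := hpos s hs
      have hXpos : 0 < y s ^ (1 - θ) := Real.rpow_pos_of_pos hyp _
      have hX : y s ^ (1 - θ) ≤ Λ * Real.sqrt (D s) := hLS s hs0
      have hDs : 0 ≤ D s := hDnn s hs0
      have hval : (Λ/θ) * (-(g' s)) = Λ * D s / y s ^ (1 - θ) := by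
        have h2 : y s ^ (θ - 1) = (y s ^ (1 - θ))⁻¹ := by
          rw [show θ - 1 = -(1 - θ) by ring, Real.rpow_neg hyp.le]
        simp only [hg'def, h2]
        field_simp
      rw [hval]
      rcases eq_or_lt_of_le hDs with hD0 | hDpos
      · rw [← hD0]; simp
      · have hsqpos : 0 < Real.sqrt (D s) := Real.sqrt_pos.2 hDpos
        have h1 : Real.sqrt (D s) = Λ * D s / (Λ * Real.sqrt (D s)) := by
          rw [mul_div_mul_left _ _ (ne_of_gt hΛ), Real.div_sqrt]
        rw [h1]
        gcongr
    have hsqint : IntervalIntegrable (fun τ => Real.sqrt (D τ)) MeasureTheory.volume a b :=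
      hsq.intervalIntegrable a b
    calc ∫ τ in a..b, Real.sqrt (D τ)
        ≤ ∫ s in a..b, (Λ/θ) * (-(g' s)) := by
          apply intervalIntegral.integral_mono_on hab hsqint (hint.neg.const_mul _) hpt
      _ = (Λ/θ) * (-(y b ^ θ - y a ^ θ)) := by
          rw [intervalIntegral.integral_const_mul, intervalIntegral.integral_neg, hftc]
      _ = (Λ/θ) * y a ^ θ - (Λ/θ) * y b ^ θ := by ring
  -- Key lemma B: the interval bound
  have keyB : ∀ t ≥ (0:ℝ), ∀ b ≥ t, ∫ τ in t..b, Real.sqrt (D τ) ≤ (Λ/θ) * y t ^ θ := by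
    intro t ht b hb
    have hM : 0 ≤ (Λ/θ) * y t ^ θ :=
      mul_nonneg (by positivity) (Real.rpow_nonneg (hynn t ht) θ)
    by_cases hS : ∃ s ∈ Set.Icc t b, y s = 0
    · set S : Set ℝ := Set.Icc t b ∩ y ⁻¹' {0} with hSdef
      have hSclosed : IsClosed S := isClosed_Icc.inter (isClosed_singleton.preimage hycont)
      have hSne : S.Nonempty := by
        obtain ⟨s, hs1, hs2⟩ := hS
        exact ⟨s, hs1, by simpa using hs2⟩
      have hSbdd : BddBelow S := ⟨t, fun s hs => hs.1.1⟩
      set T := sInf S with hTdef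
      have hTS : T ∈ S := hSclosed.csInf_mem hSne hSbdd
      have hTt : t ≤ T := hTS.1.1
      have hTb : T ≤ b := hTS.1.2
      have hyT : y T = 0 := by simpa using hTS.2
      have hlow : ∀ s, t ≤ s → s < T → 0 < y s := by
        intro s h1 h2
        rcases (hynn s (ht.trans h1)).lt_or_eq with h | h
        · exact h
        · exact absurd (csInf_le hSbdd ⟨⟨h1, h2.le.trans hTb⟩, by simpa using h.symm⟩)
            (not_le.2 h2)
      have hI2 : ∫ τ in T..b, Real.sqrt (D τ) = 0 := by
        rw [intervalIntegral.integral_of_le hTb]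
        rw [MeasureTheory.setIntegral_congr_fun measurableSet_Ioc
          (fun s hs => hDzero T (ht.trans hTt) hyT s hs.1)]
        simp
      have hI1 : ∫ τ in t..T, Real.sqrt (D τ) ≤ (Λ/θ) * y t ^ θ := by
        rcases eq_or_lt_of_le hTt with h | h
        · rw [← h, intervalIntegral.integral_same]; exact hM
        · have hF : Continuous fun s => ∫ τ in t..s, Real.sqrt (D τ) :=
            intervalIntegral.continuous_primitive (fun a b => hsq.intervalIntegrable a b) t
          have h1 : Tendsto (fun s => ∫ τ in t..s, Real.sqrt (D τ)) (nhdsWithin T (Set.Iio T))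
              (nhds (∫ τ in t..T, Real.sqrt (D τ))) :=
            (hF.tendsto T).mono_left nhdsWithin_le_nhds
          have hrpow : Tendsto (fun s => y s ^ θ) (nhds T) (nhds (y T ^ θ)) :=
            ((Real.continuousAt_rpow_const (y T) θ (Or.inr hθ0.le)).comp
              hycont.continuousAt)
          have h2 : Tendsto (fun s => (Λ/θ) * y t ^ θ - (Λ/θ) * y s ^ θ)
              (nhdsWithin T (Set.Iio T))
              (nhds ((Λ/θ) * y t ^ θ - (Λ/θ) * y T ^ θ)) :=
            (tendsto_const_nhds.sub (tendsto_const_nhds.mul hrpow)).mono_left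
              nhdsWithin_le_nhds
          have h2' : Tendsto (fun s => (Λ/θ) * y t ^ θ - (Λ/θ) * y s ^ θ)
              (nhdsWithin T (Set.Iio T)) (nhds ((Λ/θ) * y t ^ θ)) := by
            rwa [hyT, Real.zero_rpow (ne_of_gt hθ0), mul_zero, sub_zero] at h2
          refine le_of_tendsto_of_tendsto h1 h2' ?_
          filter_upwards [Ioo_mem_nhdsLT_of_mem (Set.mem_Ioc.2 ⟨h, le_refl T⟩)] with s hs
          exact keyA t s ht hs.1.le
            (fun u hu => hlow u hu.1 (lt_of_le_of_lt hu.2 hs.2))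
      have hsplit : ∫ τ in t..b, Real.sqrt (D τ) =
          (∫ τ in t..T, Real.sqrt (D τ)) + ∫ τ in T..b, Real.sqrt (D τ) :=
        (intervalIntegral.integral_add_adjacent_intervals (hsq.intervalIntegrable t T)
          (hsq.intervalIntegrable T b)).symm
      rw [hsplit, hI2, add_zero]
      exact hI1
    · push_neg at hS
      have hpos : ∀ s ∈ Set.Icc t b, 0 < y s := fun s hs =>
        (hynn s (ht.trans hs.1)).lt_of_ne' (hS s hs)
      have := keyA t b ht hb hpos
      have hnn : 0 ≤ (Λ/θ) * y b ^ θ :=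
        mul_nonneg (by positivity) (Real.rpow_nonneg (hynn b (ht.trans hb)) θ)
      linarith
  -- Conclusion
  intro t ht
  have hbound : ∀ b : ℝ, b ∈ Set.Ici t →
      ∫ τ in t..b, ‖Real.sqrt (D τ)‖ ≤ (Λ/θ) * y t ^ θ := by
    intro b hb
    have : (fun τ => ‖Real.sqrt (D τ)‖) = fun τ => Real.sqrt (D τ) :=
      funext fun τ => Real.norm_of_nonneg (Real.sqrt_nonneg _)
    rw [this]
    exact keyB t ht b hb
  have hInt : MeasureTheory.IntegrableOn (fun τ => Real.sqrt (D τ)) (Set.Ioi t) := by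
    apply MeasureTheory.integrableOn_Ioi_of_intervalIntegral_norm_bounded
      ((Λ/θ) * y t ^ θ) t (fun i : ℝ => (hsq.intervalIntegrable t i).1) tendsto_id
    filter_upwards [Filter.eventually_ge_atTop t] with b hb using hbound b hb
  refine ⟨hInt, ?_⟩
  have htend := MeasureTheory.intervalIntegral_tendsto_integral_Ioi t hInt
    (tendsto_id (α := ℝ))
  refine le_of_tendsto htend ?_
  filter_upwards [Filter.eventually_ge_atTop t] with b hb
  have := hbound b hb
  have hnorm : (fun τ => ‖Real.sqrt (D τ)‖) = fun τ => Real.sqrt (D τ) :=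
    funext fun τ => Real.norm_of_nonneg (Real.sqrt_nonneg _)
  rw [hnorm] at this
  exact this
end

section
/- Let f : [0, ∞) → [0, ∞) be measurable and suppose there exist K > 0 and β > 1 such that ∫_t^∞ f(τ) dτ ≤ K·(1+t)^{−β} for all t ≥ 1. Then there exists a constant C > 0 depending only on β such that ∫_t^∞ √(f(τ)) dτ ≤ C·√K·(1+t)^{(1−β)/2} for all t ≥ 1. -/
/-! Split `(t, ∞)` into the dyadic pieces `(2ⁿt, 2ⁿ⁺¹t]`. On each piece Cauchy–Schwarz bounds
`∫ √f` by `√(∫ f) · √(length) ≤ √(K (2ⁿt)^{-β}) · √(2ⁿt) = √K t^{(1-β)/2} · (2^{(1-β)/2})ⁿ`;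
since `β > 1` these terms form a convergent geometric series. Finally `t ≥ (1 + t)/2` turns
`t^{(1-β)/2}` into `(1 + t)^{(1-β)/2}`. -/

open MeasureTheory Set ENNReal

lemma Set.Ioi_subset_iUnion_Ioc_pow_mul {t y : ℝ} (ht : 0 < t) (hy : 1 < y) :
    Ioi t ⊆ ⋃ n : ℕ, Ioc (y ^ n * t) (y ^ (n + 1) * t) := by
  intro x (hx : t < x)
  obtain ⟨n, hn_lt, hn_le⟩ := exists_mem_Ioc_zpow (div_pos (ht.trans hx) ht) hy
  have hn : 0 ≤ n := by
    have := (one_lt_zpow_iff_right₀ hy).1 (((one_lt_div ht).2 hx).trans_le hn_le)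
    omega
  lift n to ℕ using hn
  rw [zpow_natCast, lt_div_iff₀ ht] at hn_lt
  rw [← Nat.cast_succ, zpow_natCast, div_le_iff₀ ht] at hn_le
  exact mem_iUnion.2 ⟨n, hn_lt, hn_le⟩

lemma lintegral_rpow_half_le {α : Type*} [MeasurableSpace α] {μ : Measure α} {g : α → ℝ≥0∞}
    (hg : AEMeasurable g μ) :
    ∫⁻ x, g x ^ (1 / 2 : ℝ) ∂μ ≤ (∫⁻ x, g x ∂μ) ^ (1 / 2 : ℝ) * μ univ ^ (1 / 2 : ℝ) := by
  have h := ENNReal.lintegral_mul_le_Lp_mul_Lq μ (.two_two) (hg.pow_const (1 / 2 : ℝ))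
    (aemeasurable_const (b := 1))
  simpa only [Pi.mul_apply, mul_one, one_rpow, lintegral_const, one_mul, ← ENNReal.rpow_mul,
    show (1 / 2 : ℝ) * 2 = 1 by norm_num, rpow_one, one_div_one_div] using h

lemma setLIntegral_Ioc_rpow_half_le {g : ℝ → ℝ≥0∞} (hg : Measurable g) {K a β : ℝ} (hK : 0 ≤ K)
    (ha : 0 < a) (htail : ∫⁻ x in Ioi a, g x ≤ ENNReal.ofReal (K * a ^ (-β))) :
    ∫⁻ x in Ioc a (2 * a), g x ^ (1 / 2 : ℝ) ≤ ENNReal.ofReal (√K * a ^ ((1 - β) / 2)) := by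
  have hvol : volume.restrict (Ioc a (2 * a)) univ = ENNReal.ofReal a := by
    rw [Measure.restrict_apply_univ, Real.volume_Ioc]; ring_nf
  have hpiece : ∫⁻ x in Ioc a (2 * a), g x ≤ ENNReal.ofReal (K * a ^ (-β)) :=
    (lintegral_mono_set Ioc_subset_Ioi_self).trans htail
  calc ∫⁻ x in Ioc a (2 * a), g x ^ (1 / 2 : ℝ)
      ≤ (∫⁻ x in Ioc a (2 * a), g x) ^ (1 / 2 : ℝ) * ENNReal.ofReal a ^ (1 / 2 : ℝ) :=
        hvol ▸ lintegral_rpow_half_le hg.aemeasurable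
    _ ≤ ENNReal.ofReal (K * a ^ (-β)) ^ (1 / 2 : ℝ) * ENNReal.ofReal a ^ (1 / 2 : ℝ) := by
        gcongr
    _ = ENNReal.ofReal (√K * a ^ ((1 - β) / 2)) := by
        rw [ENNReal.ofReal_rpow_of_nonneg (by positivity) (by norm_num),
          ENNReal.ofReal_rpow_of_nonneg ha.le (by norm_num), ← ENNReal.ofReal_mul (by positivity),
          Real.mul_rpow hK (by positivity), ← Real.sqrt_eq_rpow, mul_assoc,
          ← Real.rpow_mul ha.le, ← Real.rpow_add ha]
        ring_nf

lemma setLIntegral_Ioi_rpow_half_le {g : ℝ → ℝ≥0∞} (hg : Measurable g) {K t β : ℝ} (hβ : 1 < β)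
    (hK : 0 ≤ K) (ht : 0 < t) (htail : ∀ a ≥ t, ∫⁻ x in Ioi a, g x ≤ ENNReal.ofReal (K * a ^ (-β))) :
    ∫⁻ x in Ioi t, g x ^ (1 / 2 : ℝ) ≤
      ENNReal.ofReal (√K * t ^ ((1 - β) / 2) / (1 - 2 ^ ((1 - β) / 2))) := by
  have hr1 : (2 : ℝ) ^ ((1 - β) / 2) < 1 :=
    Real.rpow_lt_one_of_one_lt_of_neg one_lt_two (by linarith)
  set e := (1 - β) / 2
  set r : ℝ := 2 ^ e
  have hr0 : 0 ≤ r := by positivity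
  have hpiece (n : ℕ) : ∫⁻ x in Ioc (2 ^ n * t) (2 ^ (n + 1) * t), g x ^ (1 / 2 : ℝ) ≤
      ENNReal.ofReal (√K * t ^ e * r ^ n) := by
    have h2n : (0 : ℝ) < 2 ^ n * t := by positivity
    have hmono : t ≤ 2 ^ n * t := le_mul_of_one_le_left ht.le (one_le_pow₀ one_le_two)
    have hscale : (2 ^ n * t) ^ e = t ^ e * r ^ n := by
      rw [Real.mul_rpow (by positivity) ht.le, ← Real.rpow_natCast, ← Real.rpow_mul zero_le_two,
        mul_comm (n : ℝ), Real.rpow_mul zero_le_two, Real.rpow_natCast, mul_comm]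
    rw [pow_succ, mul_comm _ (2 : ℝ), mul_assoc, mul_assoc, ← hscale]
    exact setLIntegral_Ioc_rpow_half_le hg hK h2n (htail _ hmono)
  calc ∫⁻ x in Ioi t, g x ^ (1 / 2 : ℝ)
      ≤ ∑' n : ℕ, ∫⁻ x in Ioc (2 ^ n * t) (2 ^ (n + 1) * t), g x ^ (1 / 2 : ℝ) :=
        (lintegral_mono_set (Ioi_subset_iUnion_Ioc_pow_mul ht one_lt_two)).trans
          (lintegral_iUnion_le _ _)
    _ ≤ ∑' n : ℕ, ENNReal.ofReal (√K * t ^ e * r ^ n) := ENNReal.tsum_le_tsum hpiece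
    _ = ENNReal.ofReal (√K * t ^ e / (1 - r)) := by
        rw [← ENNReal.ofReal_tsum_of_nonneg (fun n => by positivity)
          ((summable_geometric_of_lt_one hr0 hr1).mul_left _), tsum_mul_left,
          tsum_geometric_of_lt_one hr0 hr1, div_eq_mul_inv]

lemma Real.rpow_le_two_rpow_neg_mul_one_add_rpow {t e : ℝ} (ht : 1 ≤ t) (he : e ≤ 0) :
    t ^ e ≤ 2 ^ (-e) * (1 + t) ^ e :=
  calc t ^ e ≤ ((1 + t) / 2) ^ e := Real.rpow_le_rpow_of_nonpos (by linarith) (by linarith) he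
    _ = 2 ^ (-e) * (1 + t) ^ e := by
        rw [Real.div_rpow (by linarith) zero_le_two, Real.rpow_neg zero_le_two, div_eq_inv_mul]

lemma integrable_and_integral_le_of_lintegral_ofReal_le {α : Type*} [MeasurableSpace α]
    {μ : Measure α} {f : α → ℝ} {c : ℝ} (hf : AEStronglyMeasurable f μ) (hnn : 0 ≤ᵐ[μ] f)
    (hc : 0 ≤ c) (h : ∫⁻ x, ENNReal.ofReal (f x) ∂μ ≤ ENNReal.ofReal c) :
    Integrable f μ ∧ ∫ x, f x ∂μ ≤ c :=
  ⟨⟨hf, (hasFiniteIntegral_iff_ofReal hnn).2 (h.trans_lt ofReal_lt_top)⟩, by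
    rw [integral_eq_lintegral_of_nonneg_ae hnn hf]; exact toReal_le_of_le_ofReal hc h⟩

theorem stmt8 (β : ℝ) (hβ : 1 < β) :
    ∃ C > (0 : ℝ), ∀ (f : ℝ → ℝ) (K : ℝ), 0 < K → Measurable f → (∀ t, 0 ≤ f t) →
      (∀ t ≥ (1 : ℝ), MeasureTheory.IntegrableOn f (Set.Ioi t)) →
      (∀ t ≥ (1 : ℝ), ∫ τ in Set.Ioi t, f τ ≤ K * (1 + t) ^ (-β)) →
      ∀ t ≥ (1 : ℝ),
        MeasureTheory.IntegrableOn (fun τ => Real.sqrt (f τ)) (Set.Ioi t) ∧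
          ∫ τ in Set.Ioi t, Real.sqrt (f τ) ≤
            C * Real.sqrt K * (1 + t) ^ ((1 - β) / 2) := by
  have hr1 : (2 : ℝ) ^ ((1 - β) / 2) < 1 :=
    Real.rpow_lt_one_of_one_lt_of_neg one_lt_two (by linarith)
  refine ⟨2 ^ ((β - 1) / 2) / (1 - 2 ^ ((1 - β) / 2)), div_pos (by positivity) (sub_pos.2 hr1),
    fun f K hK hfm hfnn hfi hfb t ht => ?_⟩
  have htail : ∀ a ≥ t, ∫⁻ x in Ioi a, ENNReal.ofReal (f x) ≤ ENNReal.ofReal (K * a ^ (-β)) := by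
    intro a ha
    have ha1 : 1 ≤ a := ht.trans ha
    rw [← ofReal_integral_eq_lintegral_ofReal (hfi a ha1) (ae_of_all _ hfnn)]
    refine ENNReal.ofReal_le_ofReal ((hfb a ha1).trans ?_)
    exact mul_le_mul_of_nonneg_left
      (Real.rpow_le_rpow_of_nonpos (by linarith) (by linarith) (by linarith)) hK.le
  have hsqrt : ∫⁻ x in Ioi t, ENNReal.ofReal √(f x) ≤
      ENNReal.ofReal (√K * t ^ ((1 - β) / 2) / (1 - 2 ^ ((1 - β) / 2))) := by
    simpa only [Real.sqrt_eq_rpow, ENNReal.ofReal_rpow_of_nonneg (hfnn _) one_half_pos.le] using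
      setLIntegral_Ioi_rpow_half_le hfm.ennreal_ofReal hβ hK.le (by linarith) htail
  refine integrable_and_integral_le_of_lintegral_ofReal_le hfm.sqrt.aestronglyMeasurable
    (ae_of_all _ fun _ => Real.sqrt_nonneg _) (by positivity) (hsqrt.trans (ofReal_le_ofReal ?_))
  have hpow := Real.rpow_le_two_rpow_neg_mul_one_add_rpow ht (e := (1 - β) / 2) (by linarith)
  rw [← neg_div, neg_sub] at hpow
  calc √K * t ^ ((1 - β) / 2) / (1 - 2 ^ ((1 - β) / 2))
      ≤ √K * (2 ^ ((β - 1) / 2) * (1 + t) ^ ((1 - β) / 2)) / (1 - 2 ^ ((1 - β) / 2)) := by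
        gcongr
    _ = _ := by ring
end
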